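/- arXiv:math/0203178 — 7 statements merged into one kernel-verified Lean document; each statement's English description precedes it below -/
import Mathlib

section
/- If V is finite-dimensional, then the sequence 0 → V → Ã → ℝ → 0 is exact: iV is injective, j is surjective, and the range of iV equals the kernel of j. -/
open Module

variable {V : Type*} [AddCommGroup V] [Module ℝ V]
variable {A : Type*} [AddTorsor V A]

/-- The canonical immersion of the affine space `A` into its bidual
`Ã = Module.Dual ℝ (A →ᵃ[ℝ] ℝ)`, given by `iA a φ = φ a`. -/
noncomputable def iA (a : A) : Module.Dual ℝ (A →ᵃ[ℝ] ℝ) where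
  toFun φ := φ a
  map_add' _ _ := rfl
  map_smul' _ _ := rfl

/-- The canonical linear immersion of the model vector space `V` into the bidual of `A`,
given by `iV v φ = φ.linear v`. -/
noncomputable def iV : V →ₗ[ℝ] Module.Dual ℝ (A →ᵃ[ℝ] ℝ) where
  toFun v :=
    { toFun := fun φ => φ.linear v
      map_add' := fun φ ψ => by simp
      map_smul' := fun c φ => by simp }
  map_add' v w := by ext φ; simp
  map_smul' c v := by ext φ; simp

/-- The projection `j` of the bidual onto `ℝ`: evaluation at the constant affine map `1`. -/
noncomputable def jmap : Module.Dual ℝ (A →ᵃ[ℝ] ℝ) →ₗ[ℝ] ℝ where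
  toFun z := z (AffineMap.const ℝ A (1 : ℝ))
  map_add' _ _ := rfl
  map_smul' _ _ := rfl

/-- If `V` is finite dimensional, the sequence `0 → V → Ã → ℝ → 0` is exact. -/
theorem stmt2 {V : Type*} [AddCommGroup V] [Module ℝ V] {A : Type*} [AddTorsor V A]
    [FiniteDimensional ℝ V] :
    Function.Injective (iV : V →ₗ[ℝ] Module.Dual ℝ (A →ᵃ[ℝ] ℝ)) ∧
    Function.Surjective (jmap : Module.Dual ℝ (A →ᵃ[ℝ] ℝ) →ₗ[ℝ] ℝ) ∧
    LinearMap.range (iV : V →ₗ[ℝ] Module.Dual ℝ (A →ᵃ[ℝ] ℝ)) = LinearMap.ker jmap := by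
  obtain ⟨a₀⟩ := (inferInstance : Nonempty A)
  -- affine map with prescribed linear part, vanishing at a₀
  let aff : (V →ₗ[ℝ] ℝ) → (A →ᵃ[ℝ] ℝ) := fun f =>
    { toFun := fun a => f (a -ᵥ a₀)
      linear := f
      map_vadd' := fun p v => by
        simp [vadd_vsub_assoc, map_add, vadd_eq_add] }
  have haff_apply : ∀ (f : V →ₗ[ℝ] ℝ) (a : A), aff f a = f (a -ᵥ a₀) := fun _ _ => rfl
  have haff_lin : ∀ f : V →ₗ[ℝ] ℝ, (aff f).linear = f := fun _ => rfl
  -- decomposition of an arbitrary affine map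
  have hdecomp : ∀ φ : A →ᵃ[ℝ] ℝ,
      φ = aff φ.linear + (φ a₀) • AffineMap.const ℝ A (1 : ℝ) := by
    intro φ
    ext a
    have : φ a = φ ((a -ᵥ a₀) +ᵥ a₀) := by rw [vsub_vadd]
    rw [this, φ.map_vadd]
    simp [haff_apply, vadd_eq_add, mul_comm]
  refine ⟨?_, ?_, ?_⟩
  · -- injectivity
    intro v w h
    have : ∀ f : V →ₗ[ℝ] ℝ, f v = f w := by
      intro f
      have := congrFun (congrArg (fun z : Module.Dual ℝ (A →ᵃ[ℝ] ℝ) => z.toFun) h) (aff f)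
      simpa [iV, haff_lin] using this
    have hvw : ∀ f : V →ₗ[ℝ] ℝ, f (v - w) = 0 := by
      intro f; rw [map_sub, this f, sub_self]
    have := (Module.forall_dual_apply_eq_zero_iff ℝ (v - w)).mp hvw
    exact sub_eq_zero.mp this
  · -- surjectivity
    intro r
    refine ⟨r • iA a₀, ?_⟩
    simp [jmap, iA]
  · -- range = ker
    ext z
    simp only [LinearMap.mem_range, LinearMap.mem_ker]
    constructor
    · rintro ⟨v, rfl⟩
      simp [jmap, iV]
    · intro hz
      -- the functional on the dual of V
      let w : Module.Dual ℝ (Module.Dual ℝ V) :=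
        { toFun := fun f => z (aff f)
          map_add' := fun f g => by
            have : aff (f + g) = aff f + aff g := by
              ext a; simp [haff_apply]
            show z (aff (f+g)) = z (aff f) + z (aff g)
            rw [this, map_add]
          map_smul' := fun c f => by
            have : aff (c • f) = c • aff f := by
              ext a; simp [haff_apply]
            show z (aff (c • f)) = c • z (aff f)
            rw [this, map_smul] }
      obtain ⟨v, hv⟩ := (Module.evalEquiv ℝ V).surjective w
      refine ⟨v, ?_⟩
      ext φ
      have h1 : z φ = z (aff φ.linear) + φ a₀ * z (AffineMap.const ℝ A (1 : ℝ)) := by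
        conv_lhs => rw [hdecomp φ]
        rw [map_add, map_smul]; rfl
      have h2 : z (aff φ.linear) = φ.linear v := by
        have := congrFun (congrArg (fun u : Module.Dual ℝ (Module.Dual ℝ V) => u.toFun) hv)
          φ.linear
        simpa [Module.evalEquiv, w, Module.Dual.eval] using this.symm
      show φ.linear v = z φ
      have hz' : z (AffineMap.const ℝ A (1 : ℝ)) = 0 := hz
      rw [h1, hz', mul_zero, add_zero, h2]
end

section
/- If V is finite-dimensional, then the image of the canonical map iA : A → Ã is exactly the affine hyperplane j⁻¹(1), i.e., for z ∈ Ã one has j(z) = 1 if and only if z = iA(a) for some a ∈ A. -/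
open Module

variable {V : Type*} [AddCommGroup V] [Module ℝ V]
variable {A : Type*} [AddTorsor V A]

/-- The affine map `x ↦ f (x -ᵥ a₀)` with linear part `f`. -/
noncomputable def phiF (a₀ : A) (f : Module.Dual ℝ V) : A →ᵃ[ℝ] ℝ where
  toFun x := f (x -ᵥ a₀)
  linear := f
  map_vadd' p v := by simp [vadd_vsub_assoc, add_comm]

lemma phiF_decomp (a₀ : A) (φ : A →ᵃ[ℝ] ℝ) :
    φ = phiF a₀ φ.linear + (φ a₀) • AffineMap.const ℝ A (1 : ℝ) := by
  ext x
  have : φ x = φ ((x -ᵥ a₀) +ᵥ a₀) := by rw [vsub_vadd]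
  rw [this, AffineMap.map_vadd]
  simp [phiF, mul_comm]

/-- If `V` is finite dimensional, the image of `iA` is exactly the hyperplane `j⁻¹(1)`. -/
theorem stmt3 {V : Type*} [AddCommGroup V] [Module ℝ V] {A : Type*} [AddTorsor V A]
    [FiniteDimensional ℝ V] (z : Module.Dual ℝ (A →ᵃ[ℝ] ℝ)) :
    jmap z = 1 ↔ ∃ a : A, z = iA a := by
  constructor
  · intro hz
    obtain ⟨a₀⟩ := (inferInstance : Nonempty A)
    set R : Module.Dual ℝ (Module.Dual ℝ V) :=
      { toFun := fun f => z (phiF a₀ f)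
        map_add' := fun f g => by
          show z (phiF a₀ (f + g)) = z (phiF a₀ f) + z (phiF a₀ g)
          have : phiF a₀ (f + g) = phiF a₀ f + phiF a₀ g := by ext x; simp [phiF]
          rw [this, map_add]
        map_smul' := fun c f => by
          show z (phiF a₀ (c • f)) = (RingHom.id ℝ) c • z (phiF a₀ f)
          have : phiF a₀ (c • f) = c • phiF a₀ f := by ext x; simp [phiF]
          rw [this, map_smul]; rfl } with hR
    set v : V := (Module.evalEquiv ℝ V).symm R with hv
    refine ⟨v +ᵥ a₀, ?_⟩
    ext φ
    have hdec := phiF_decomp a₀ φ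
    have h1 : z φ = z (phiF a₀ φ.linear) + φ a₀ * jmap z := by
      conv_lhs => rw [hdec]
      rw [map_add, map_smul]
      rfl
    have h2 : z (phiF a₀ φ.linear) = φ.linear v := by
      have := Module.apply_evalEquiv_symm_apply ℝ V φ.linear R
      rw [← hv] at this
      rw [this]; rfl
    have h3 : (iA (v +ᵥ a₀) : Module.Dual ℝ (A →ᵃ[ℝ] ℝ)) φ = φ.linear v + φ a₀ := by
      show φ (v +ᵥ a₀) = _
      rw [AffineMap.map_vadd]; rfl
    rw [h1, h2, hz, h3, mul_one]
  · rintro ⟨a, rfl⟩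
    show (AffineMap.const ℝ A (1 : ℝ)) a = 1
    rfl
end

section
/- Assume V is finite-dimensional and fix a point a₀ ∈ A. Then the map ℝ × V → Ã given by (λ, v) ↦ λ • iA(a₀) + iV(v) is a bijection; in other words, every element z ∈ Ã can be written uniquely in the form z = λ • iA(a₀) + iV(v) with λ ∈ ℝ and v ∈ V (and necessarily λ = j(z)). -/
open Module

variable {V : Type*} [AddCommGroup V] [Module ℝ V]
variable {A : Type*} [AddTorsor V A]

/-- Lift of a linear functional on `V` to an affine map on `A` based at `a₀`. -/
noncomputable def Lmap (a₀ : A) : Module.Dual ℝ V →ₗ[ℝ] (A →ᵃ[ℝ] ℝ) where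
  toFun f := f.toAffineMap.comp ((AffineEquiv.vaddConst ℝ a₀).symm : A →ᵃ[ℝ] V)
  map_add' f g := by ext x; simp
  map_smul' c f := by ext x; simp

lemma Lmap_apply (a₀ : A) (f : Module.Dual ℝ V) (x : A) : Lmap a₀ f x = f (x -ᵥ a₀) := rfl

lemma Lmap_linear (a₀ : A) (f : Module.Dual ℝ V) : (Lmap a₀ f).linear = f := by
  ext v; rfl

lemma affine_decomp (a₀ : A) (φ : A →ᵃ[ℝ] ℝ) :
    φ = (φ a₀) • AffineMap.const ℝ A (1 : ℝ) + Lmap a₀ φ.linear := by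
  ext x
  have : φ x = φ ((x -ᵥ a₀) +ᵥ a₀) := by rw [vsub_vadd]
  rw [this, φ.map_vadd]
  simp [Lmap_apply, add_comm, mul_comm]

/-- With a base point `a₀` fixed, `(λ, v) ↦ λ • iA a₀ + iV v` is a bijection from `ℝ × V`
onto `Ã`; moreover the coefficient `λ` of a decomposition is necessarily `j z`. -/
theorem stmt4 {V : Type*} [AddCommGroup V] [Module ℝ V] {A : Type*} [AddTorsor V A]
    [FiniteDimensional ℝ V] (a₀ : A) :
    Function.Bijective
      (fun p : ℝ × V => p.1 • iA a₀ + iV p.2 : ℝ × V → Module.Dual ℝ (A →ᵃ[ℝ] ℝ)) ∧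
    ∀ (lam : ℝ) (v : V), jmap (lam • iA a₀ + iV v : Module.Dual ℝ (A →ᵃ[ℝ] ℝ)) = lam := by
  classical
  constructor
  · constructor
    · -- injectivity
      have key : ∀ p : ℝ × V,
          (p.1 • iA a₀ + iV p.2 : Module.Dual ℝ (A →ᵃ[ℝ] ℝ)) = 0 → p = 0 := by
        rintro ⟨lam, v⟩ h
        have hlam : lam = 0 := by
          have := LinearMap.congr_fun h (AffineMap.const ℝ A (1 : ℝ))
          simpa [iA, iV] using this
        have hv : v = 0 := by
          rw [← Module.forall_dual_apply_eq_zero_iff ℝ]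
          intro f
          have := LinearMap.congr_fun h (Lmap a₀ f)
          simpa [iA, iV, Lmap_apply, Lmap_linear, hlam] using this
        simp [hlam, hv, Prod.ext_iff]
      intro p q h
      have h0 : (p - q).1 • iA a₀ + iV (p - q).2 = 0 := by
        simp only at h
        ext φ
        have hφ := LinearMap.congr_fun h φ
        simp only [iA, iV, LinearMap.add_apply, LinearMap.smul_apply, smul_eq_mul,
          LinearMap.coe_mk, AddHom.coe_mk, LinearMap.zero_apply, LinearMap.sub_apply, Prod.fst_sub, Prod.snd_sub,
          map_sub] at hφ ⊢
        linarith
      have := key _ h0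
      rwa [sub_eq_zero] at this
    · -- surjectivity
      intro z
      set v := (Module.evalEquiv ℝ V).symm (z ∘ₗ Lmap a₀) with hv
      refine ⟨(jmap z, v), ?_⟩
      have hev : ∀ f : Module.Dual ℝ V, f v = z (Lmap a₀ f) := by
        intro f
        have : Module.Dual.eval ℝ V v = z ∘ₗ Lmap a₀ := by
          rw [hv]; exact (Module.evalEquiv ℝ V).apply_symm_apply _
        exact LinearMap.congr_fun this f
      ext φ
      have hdec := affine_decomp a₀ φ
      have : z φ = φ a₀ * z (AffineMap.const ℝ A (1 : ℝ)) + z (Lmap a₀ φ.linear) := by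
        conv_lhs => rw [hdec]
        simp [smul_eq_mul]
      simp only [iA, iV, jmap, LinearMap.add_apply, LinearMap.smul_apply, LinearMap.coe_mk,
        AddHom.coe_mk, smul_eq_mul]
      rw [hev φ.linear, this]
      ring
  · intro lam v
    simp [jmap, iA, iV]
end

section
/- If V is finite-dimensional, then the image of the canonical map iA : A → Ã spans Ã as a real vector space: Submodule.span ℝ (Set.range iA) = ⊤. -/
open Module

variable {V : Type*} [AddCommGroup V] [Module ℝ V]
variable {A : Type*} [AddTorsor V A]

/-- If `V` is finite dimensional, the image of `iA` spans `Ã`. -/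
theorem stmt5 {V : Type*} [AddCommGroup V] [Module ℝ V] {A : Type*} [AddTorsor V A]
    [FiniteDimensional ℝ V] :
    Submodule.span ℝ (Set.range (iA : A → Module.Dual ℝ (A →ᵃ[ℝ] ℝ))) = ⊤ := by
  obtain ⟨a₀⟩ := (AddTorsor.nonempty : Nonempty A)
  haveI : FiniteDimensional ℝ (A →ᵃ[ℝ] ℝ) := by
    let e : (A →ᵃ[ℝ] ℝ) →ₗ[ℝ] ℝ × (V →ₗ[ℝ] ℝ) :=
      { toFun := fun φ => (φ a₀, φ.linear)
        map_add' := fun φ ψ => by simp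
        map_smul' := fun c φ => by simp }
    have hinj : Function.Injective e := by
      intro φ ψ h
      have h1 : φ a₀ = ψ a₀ := congrArg Prod.fst h
      have h2 : φ.linear = ψ.linear := congrArg Prod.snd h
      ext a
      have ha : a = (a -ᵥ a₀ : V) +ᵥ a₀ := by simp
      rw [ha, AffineMap.map_vadd, AffineMap.map_vadd, h1, h2]
    exact FiniteDimensional.of_injective e hinj
  rw [← Subspace.dualAnnihilator_inj, Submodule.dualAnnihilator_top]
  rw [eq_bot_iff]
  intro g hg
  rw [Submodule.mem_dualAnnihilator] at hg
  obtain ⟨φ, rfl⟩ := (Module.evalEquiv ℝ (A →ᵃ[ℝ] ℝ)).surjective g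
  have hφ : φ = 0 := by
    ext a
    have := hg (iA a) (Submodule.subset_span ⟨a, rfl⟩)
    simpa [Module.evalEquiv, iA] using this
  simp [hφ]
end

section
/- Suppose the bracket [·,·] on V is ℝ-bilinear and alternating, and that each D_a acts by derivations, i.e., D_a([v,w]) = [D_a(v), w] + [v, D_a(w)] for all a ∈ A and v, w ∈ V, and the compatibility condition D_{v +ᵥ a}(w) = D_a(w) + [v,w] holds. Then the bracket on V automatically satisfies the Jacobi identity: [u,[v,w]] = [[u,v],w] + [v,[u,w]] for all u, v, w ∈ V. -/
/-- If the bracket on `V` is bilinear and alternating, each `D a` is a derivation of it, and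
the compatibility `D (v +ᵥ a) w = D a w + ⁅v,w⁆` holds, then the bracket satisfies the
Jacobi identity. -/
theorem stmt7 {V : Type*} [AddCommGroup V] [Module ℝ V] {A : Type*} [AddTorsor V A]
    (B : V →ₗ[ℝ] V →ₗ[ℝ] V) (halt : ∀ v : V, B v v = 0)
    (D : A → (V →ₗ[ℝ] V))
    (hder : ∀ (a : A) (v w : V), D a (B v w) = B (D a v) w + B v (D a w))
    (hcomp : ∀ (a : A) (v w : V), D (v +ᵥ a) w = D a w + B v w) :
    ∀ u v w : V, B u (B v w) = B (B u v) w + B v (B u w) := by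
  intro u v w
  obtain ⟨a⟩ : Nonempty A := AddTorsor.nonempty
  have h1 := hder (u +ᵥ a) v w
  simp only [hcomp, hder, map_add, LinearMap.add_apply] at h1
  -- h1 : D a (B v w) + B u (B v w) = ...
  linear_combination (norm := module) h1
end

section
/- The bracket formula used to extend an affine Lie algebra structure to the bidual is independent of the chosen base point: for all a ∈ A, w, v₁, v₂ ∈ V and λ₁, λ₂ ∈ ℝ, one has [v₁, v₂] + λ₁ • D_a(v₂) − λ₂ • D_a(v₁) = [v₁ − λ₁ • w, v₂ − λ₂ • w] + λ₁ • D_{w +ᵥ a}(v₂ − λ₂ • w) − λ₂ • D_{w +ᵥ a}(v₁ − λ₁ • w). -/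
/-- The bracket formula extending an affine Lie algebra structure to the bidual does not
depend on the choice of base point. -/
theorem stmt9 {V : Type*} [AddCommGroup V] [Module ℝ V] {A : Type*} [AddTorsor V A]
    (B : V →ₗ[ℝ] V →ₗ[ℝ] V) (halt : ∀ v : V, B v v = 0)
    (D : A → (V →ₗ[ℝ] V))
    (hder : ∀ (a : A) (v w : V), D a (B v w) = B (D a v) w + B v (D a w))
    (hcomp : ∀ (a : A) (v w : V), D (v +ᵥ a) w = D a w + B v w) :
    ∀ (a : A) (w v₁ v₂ : V) (l₁ l₂ : ℝ),
      B v₁ v₂ + l₁ • D a v₂ - l₂ • D a v₁ =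
        B (v₁ - l₁ • w) (v₂ - l₂ • w) + l₁ • D (w +ᵥ a) (v₂ - l₂ • w)
          - l₂ • D (w +ᵥ a) (v₁ - l₁ • w) := by
  intro a w v₁ v₂ l₁ l₂
  have hanti : ∀ x y : V, B x y = - B y x := by
    intro x y
    have h := halt (x + y)
    simp only [map_add, LinearMap.add_apply, halt] at h
    linear_combination (norm := abel) h
  simp only [hcomp, map_sub, map_smul, LinearMap.sub_apply, LinearMap.add_apply,
    LinearMap.smul_apply, halt, smul_sub, smul_add, smul_smul, smul_zero,
    hanti w v₁]
  module
end

section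
/- Assume V is finite-dimensional and let Θ be an alternating k-form on Ã (k ≥ 1). If Θ vanishes on all k-tuples of elements in the image of the canonical immersion, i.e., Θ(iA(a₁), …, iA(a_k)) = 0 for all a₁, …, a_k ∈ A, then Θ = 0. -/
open Module

variable {V : Type*} [AddCommGroup V] [Module ℝ V]
variable {A : Type*} [AddTorsor V A]

/-! Over a finite-dimensional `V`, every element `z` of the bidual splits as
`z = jmap z • iA a₀ + iV v`: the functional `f ↦ z (f (· -ᵥ a₀))` on `Dual V` is evaluation at
some `v` by reflexivity, and `iV v = iA (v +ᵥ a₀) - iA a₀`. Hence `iA` has spanning range, and a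
multilinear form is determined by its values on tuples from a spanning set. -/

theorem AlternatingMap.ext_on_range {K M N ι κ : Type*} [Field K] [AddCommGroup M] [Module K M]
    [AddCommMonoid N] [Module K N] [Finite ι] {w : κ → M}
    (hw : Submodule.span K (Set.range w) = ⊤) {f g : M [⋀^ι]→ₗ[K] N}
    (h : ∀ a : ι → κ, f (w ∘ a) = g (w ∘ a)) : f = g := by
  refine (Basis.ofSpan hw.ge).ext_alternating fun v _ => ?_
  choose a ha using fun i => Basis.ofSpan_subset hw.ge ⟨v i, rfl⟩
  simpa only [Function.comp_def, ha] using h a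

noncomputable def affineMapOfDual (a₀ : A) : Module.Dual ℝ V →ₗ[ℝ] (A →ᵃ[ℝ] ℝ) where
  toFun f :=
    { toFun := fun a => f (a -ᵥ a₀)
      linear := f
      map_vadd' := fun p v => by simp [vadd_vsub_assoc] }
  map_add' f g := by ext a; simp
  map_smul' c f := by ext a; simp

theorem AffineMap.eq_affineMapOfDual_add_const (a₀ : A) (φ : A →ᵃ[ℝ] ℝ) :
    φ = affineMapOfDual a₀ φ.linear + φ a₀ • AffineMap.const ℝ A (1 : ℝ) := by
  ext a
  have h := φ.map_vadd a₀ (a -ᵥ a₀)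
  rw [vsub_vadd] at h
  rw [AffineMap.coe_add, Pi.add_apply, AffineMap.coe_smul, Pi.smul_apply, AffineMap.const_apply,
    smul_eq_mul, mul_one, h, vadd_eq_add]
  rfl

theorem iV_eq_iA_sub (a₀ : A) (v : V) :
    (iV v : Module.Dual ℝ (A →ᵃ[ℝ] ℝ)) = iA (v +ᵥ a₀) - iA a₀ := by
  ext φ
  simp [iV, iA]

theorem jmap_iA (a : A) : jmap (iA a) = 1 := rfl

theorem exists_iV_eq_of_jmap_eq_zero [FiniteDimensional ℝ V] {z : Module.Dual ℝ (A →ᵃ[ℝ] ℝ)}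
    (hz : jmap z = 0) : ∃ v : V, iV v = z := by
  obtain ⟨a₀⟩ : Nonempty A := inferInstance
  obtain ⟨v, hv⟩ := (Module.evalEquiv ℝ V).surjective (z ∘ₗ affineMapOfDual a₀)
  refine ⟨v, LinearMap.ext fun φ => ?_⟩
  calc iV v φ = z (affineMapOfDual a₀ φ.linear) := LinearMap.congr_fun hv φ.linear
    _ = z φ := by
      conv_rhs => rw [φ.eq_affineMapOfDual_add_const a₀]
      rw [map_add, map_smul, show z (AffineMap.const ℝ A 1) = 0 from hz, smul_zero, add_zero]

theorem span_range_iA [FiniteDimensional ℝ V] :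
    Submodule.span ℝ (Set.range (iA : A → Module.Dual ℝ (A →ᵃ[ℝ] ℝ))) = ⊤ := by
  refine Submodule.eq_top_iff'.2 fun z => ?_
  obtain ⟨a₀⟩ : Nonempty A := inferInstance
  obtain ⟨v, hv⟩ := exists_iV_eq_of_jmap_eq_zero (z := z - jmap z • iA a₀)
    (by simp [jmap_iA])
  have hz : z = jmap z • iA a₀ + (iA (v +ᵥ a₀) - iA a₀) := by
    rw [← iV_eq_iA_sub, hv, add_sub_cancel]
  rw [hz]
  have mem : ∀ a : A, iA a ∈ Submodule.span ℝ (Set.range (iA : A → _)) :=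
    fun a => Submodule.subset_span ⟨a, rfl⟩
  exact add_mem (Submodule.smul_mem _ _ (mem a₀)) (sub_mem (mem _) (mem a₀))

theorem stmt13_general {V : Type*} [AddCommGroup V] [Module ℝ V] {A : Type*} [AddTorsor V A]
    [FiniteDimensional ℝ V] {k : ℕ}
    (Θ : AlternatingMap ℝ (Module.Dual ℝ (A →ᵃ[ℝ] ℝ)) ℝ (Fin k))
    (h : ∀ a : Fin k → A, Θ (fun i => iA (a i)) = 0) :
    Θ = 0 :=
  AlternatingMap.ext_on_range span_range_iA h

/-- If `V` is finite dimensional, an alternating `k`-form (`k ≥ 1`) on the bidual `Ã` which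
vanishes on all tuples of elements in the image of the canonical immersion `iA` is zero. -/
theorem stmt13 {V : Type*} [AddCommGroup V] [Module ℝ V] {A : Type*} [AddTorsor V A]
    [FiniteDimensional ℝ V] {k : ℕ} (hk : 1 ≤ k)
    (Θ : AlternatingMap ℝ (Module.Dual ℝ (A →ᵃ[ℝ] ℝ)) ℝ (Fin k))
    (h : ∀ a : Fin k → A, Θ (fun i => iA (a i)) = 0) :
    Θ = 0 :=
  stmt13_general (V := V) Θ h
end
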